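/- Let n ≥ m+2 and let I be an independent set of P_n^m with min(I) ≤ m+1 and max(I) ≥ n−m. Then γ_gr(P_n^m, I) = max(I) − min(I) + 1 − (|I|−1)·m. -/

import Mathlib

namespace GrundyDom

/-- Closed neighborhood N[v]. -/
def cn {V : Type*} (G : SimpleGraph V) (v : V) : Set V := insert v (G.neighborSet v)

/-- Union of closed neighborhoods of the vertices of a list. -/
def cnUnion {V : Type*} (G : SimpleGraph V) (L : List V) : Set V := ⋃ v ∈ L, cn G v

/-- Private neighborhood of `v` with respect to the first `i` entries of `S`:
`N[v] \ (N[v_1] ∪ ... ∪ N[v_i])`. -/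
def PN {V : Type*} (G : SimpleGraph V) (S : List V) (i : ℕ) (v : V) : Set V :=
  cn G v \ cnUnion G (S.take i)

/-- A legal dominating sequence: distinct vertices, dominating set, and every
vertex of the sequence has a nonempty private neighborhood w.r.t. its predecessors. -/
structure IsLegal {V : Type*} (G : SimpleGraph V) (S : List V) : Prop where
  nodup : S.Nodup
  dominates : ∀ v : V, ∃ u ∈ S, v ∈ cn G u
  legal : ∀ i : Fin S.length, (PN G S i.val (S.get i)).Nonempty

/-- The set `I_S` of vertices that footprint themselves in `S`. -/
def selfFoot {V : Type*} (G : SimpleGraph V) (S : List V) : Set V :=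
  {v | ∃ i : Fin S.length, S.get i = v ∧ v ∈ PN G S i.val v}

/-- Grundy domination number: maximum length of a legal dominating sequence. -/
noncomputable def gammaGr {V : Type*} (G : SimpleGraph V) : ℕ :=
  sSup {k | ∃ S : List V, IsLegal G S ∧ S.length = k}

/-- `γ_gr(G, I)`: maximum length of a legal dominating sequence `S` with `I_S = I`. -/
noncomputable def gammaGrOn {V : Type*} (G : SimpleGraph V) (I : Set V) : ℕ :=
  sSup {k | ∃ S : List V, IsLegal G S ∧ selfFoot G S = I ∧ S.length = k}

/-- `γ_gr^u(G)`: maximum of `γ_gr(G, I)` over independent sets `I` containing `u`. -/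
noncomputable def gammaGrVert {V : Type*} (G : SimpleGraph V) (u : V) : ℕ :=
  sSup {k | ∃ I : Set V, (∀ ⦃a⦄, a ∈ I → ∀ ⦃b⦄, b ∈ I → a ≠ b → ¬ G.Adj a b) ∧
    u ∈ I ∧ k = gammaGrOn G I}

/-- Independent set of a graph. -/
def IsIndep {V : Type*} (G : SimpleGraph V) (I : Set V) : Prop :=
  ∀ ⦃u⦄, u ∈ I → ∀ ⦃v⦄, v ∈ I → u ≠ v → ¬ G.Adj u v

/-- The X-join product `G ↩ 𝓡`: replace each vertex `v` of `G` by the graph `R v`. -/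
def XJoin {V : Type*} (G : SimpleGraph V) {W : V → Type*} (R : ∀ v, SimpleGraph (W v)) :
    SimpleGraph (Σ v, W v) where
  Adj x y := G.Adj x.1 y.1 ∨ ∃ h : x.1 = y.1, (R y.1).Adj (h ▸ x.2) y.2
  symm := by
    constructor
    rintro ⟨a, xa⟩ ⟨b, yb⟩ (h | ⟨h, hadj⟩)
    · exact Or.inl h.symm
    · dsimp at h hadj
      subst h
      exact Or.inr ⟨rfl, hadj.symm⟩
  loopless := by
    constructor
    rintro ⟨a, xa⟩ (h | ⟨h, hadj⟩)
    · exact G.loopless.irrefl a h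
    · exact (R a).loopless.irrefl xa hadj

/-- The lexicographic product `G ∘ H`. -/
def Lex {V W : Type*} (G : SimpleGraph V) (H : SimpleGraph W) : SimpleGraph (V × W) where
  Adj x y := G.Adj x.1 y.1 ∨ (x.1 = y.1 ∧ H.Adj x.2 y.2)
  symm := by
    constructor
    rintro x y (h | ⟨h1, h2⟩)
    · exact Or.inl h.symm
    · exact Or.inr ⟨h1.symm, h2.symm⟩
  loopless := by
    constructor
    rintro x (h | ⟨_, h⟩)
    · exact G.loopless.irrefl _ h
    · exact H.loopless.irrefl _ h

/-- The replacement graph `G_{u ↩ H}`: replace the vertex `u` of `G` by `H`. -/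
def Replace {V : Type*} (G : SimpleGraph V) (u : V) {W : Type*} (H : SimpleGraph W) :
    SimpleGraph ({v : V // v ≠ u} ⊕ W) where
  Adj x y :=
    match x, y with
    | Sum.inl a, Sum.inl b => G.Adj a.1 b.1
    | Sum.inl a, Sum.inr _ => G.Adj a.1 u
    | Sum.inr _, Sum.inl b => G.Adj u b.1
    | Sum.inr h1, Sum.inr h2 => H.Adj h1 h2
  symm := by constructor; rintro (a|a) (b|b) h <;> exact h.symm
  loopless := by constructor; rintro (a|a) h <;> exact h.ne rfl

/-- `C_n^m`: the m-th power of the n-cycle, on vertex set `ZMod n`;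
two vertices are adjacent iff their circular distance is between 1 and m. -/
def cyclePow (n m : ℕ) : SimpleGraph (ZMod n) where
  Adj i j := i ≠ j ∧ ∃ k : ℕ, 1 ≤ k ∧ k ≤ m ∧ (j = i + k ∨ i = j + k)
  symm := by
    constructor
    rintro i j ⟨hne, k, h1, h2, h3⟩
    exact ⟨hne.symm, k, h1, h2, h3.symm⟩
  loopless := ⟨fun i h => h.1 rfl⟩

/-- `P_n^m`: the m-th power of the n-path, on vertex set `Fin n`
(vertex `i` represents the `(i+1)`-st vertex of the path);
two vertices adjacent iff their distance is between 1 and m. -/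
def pathPow (n m : ℕ) : SimpleGraph (Fin n) where
  Adj i j := i ≠ j ∧ Nat.dist i.val j.val ≤ m
  symm := by
    constructor
    rintro i j ⟨hne, hd⟩
    exact ⟨hne.symm, by rwa [Nat.dist_comm]⟩
  loopless := ⟨fun i h => h.1 rfl⟩

end GrundyDom

open GrundyDom Finset

/-!
Write `a₁ = min I` and `aₖ = max I`. A vertex of `I` footprints itself, so it is played before
all of its neighbours. Hence no vertex outside `[a₁, aₖ]` occurs in `S`: its closed
neighbourhood lies inside that of `a₁` or `aₖ`, which was played earlier. For consecutive
`b < c` in `I`, the first vertex of `S` in `[b, c]` finds the interval undominated and footprints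
at least `m + 1` of its vertices, every other vertex of `S` there footprints at least one, and
footprints are disjoint; so `S` has at most `c - b + 1 - m` vertices in `[b, c]`. Summing over
consecutive pairs gives the upper bound. It is attained by playing, from left to right, the
vertices of `[a₁, aₖ]` that do not lie within distance `m` below a vertex of `I`.
-/

namespace GrundyDom

section Footprint

variable {V : Type*} {G : SimpleGraph V}

lemma mem_cn_comm {v w : V} : w ∈ cn G v ↔ v ∈ cn G w := by
  simp only [cn, Set.mem_insert_iff, SimpleGraph.mem_neighborSet, G.adj_comm, eq_comm]

variable [DecidableEq V] {S : List V}

variable (G S) in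
def footprint (x : V) : Set V := PN G S (S.idxOf x) x

lemma mem_footprint {x w : V} :
    w ∈ footprint G S x ↔ w ∈ cn G x ∧ ∀ u ∈ S, S.idxOf u < S.idxOf x → w ∉ cn G u := by
  simp only [footprint, PN, cnUnion, Set.mem_sdiff, Set.mem_iUnion, exists_prop, not_exists,
    not_and]
  refine and_congr_right fun _ => forall_congr' fun u => ⟨fun h hu hlt => ?_, fun h hu => ?_⟩
  · exact h ((List.mem_take_iff_idxOf_lt hu).2 hlt)
  · have huS := List.mem_of_mem_take hu
    exact h huS ((List.mem_take_iff_idxOf_lt huS).1 hu)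

lemma footprint_disjoint {x y : V} (hx : x ∈ S) (hy : y ∈ S) (hxy : x ≠ y) :
    Disjoint (footprint G S x) (footprint G S y) := by
  rw [Set.disjoint_left]
  intro w hwx hwy
  rw [mem_footprint] at hwx hwy
  rcases lt_or_gt_of_ne (mt (List.idxOf_inj hx).1 hxy) with h | h
  · exact hwy.2 x hx h hwx.1
  · exact hwx.2 y hy h hwy.1

lemma footprint_getElem {i : ℕ} (hS : S.Nodup) (hi : i < S.length) :
    footprint G S S[i] = PN G S i S[i] := by
  rw [footprint, hS.idxOf_getElem]

lemma IsLegal.footprint_nonempty (hS : IsLegal G S) {x : V} (hx : x ∈ S) :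
    (footprint G S x).Nonempty := by
  obtain ⟨i, rfl⟩ := List.mem_iff_get.1 hx
  simpa [footprint_getElem hS.nodup] using hS.legal i

lemma isLegal_of_footprint_nonempty (hS : S.Nodup) (hdom : ∀ v, ∃ u ∈ S, v ∈ cn G u)
    (hfp : ∀ x ∈ S, (footprint G S x).Nonempty) : IsLegal G S where
  nodup := hS
  dominates := hdom
  legal i := by simpa [footprint_getElem hS] using hfp _ (List.get_mem S i)

lemma mem_selfFoot_iff (hS : S.Nodup) {x : V} :
    x ∈ selfFoot G S ↔ x ∈ S ∧ x ∈ footprint G S x := by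
  constructor
  · rintro ⟨i, rfl, hi⟩
    exact ⟨List.get_mem S i, by simpa [footprint_getElem hS] using hi⟩
  · rintro ⟨hx, hfx⟩
    exact ⟨⟨S.idxOf x, List.idxOf_lt_length_iff.2 hx⟩, by simp, hfx⟩

lemma idxOf_lt_of_mem_selfFoot (hS : S.Nodup) {a u : V} (ha : a ∈ selfFoot G S) (hu : u ∈ S)
    (hua : u ≠ a) (hadj : u ∈ cn G a) : S.idxOf a < S.idxOf u := by
  obtain ⟨haS, hfa⟩ := (mem_selfFoot_iff hS).1 ha
  rcases lt_trichotomy (S.idxOf a) (S.idxOf u) with h | h | h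
  · exact h
  · exact absurd ((List.idxOf_inj haS).1 h).symm hua
  · exact absurd (mem_cn_comm.1 hadj) ((mem_footprint.1 hfa).2 u hu h)

lemma notMem_cn_of_mem_footprint (hS : S.Nodup) {a u w : V} (ha : a ∈ selfFoot G S)
    (hu : u ∈ S) (hua : u ≠ a) (hadj : u ∈ cn G a) (hw : w ∈ footprint G S u) : w ∉ cn G a :=
  (mem_footprint.1 hw).2 a ((mem_selfFoot_iff hS).1 ha).1
    (idxOf_lt_of_mem_selfFoot hS ha hu hua hadj)

lemma IsLegal.notMem_of_cn_subset (hS : IsLegal G S) {a u : V} (ha : a ∈ selfFoot G S)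
    (hua : u ≠ a) (hadj : u ∈ cn G a) (hsub : cn G u ⊆ cn G a) : u ∉ S := by
  intro hu
  obtain ⟨w, hw⟩ := hS.footprint_nonempty hu
  exact notMem_cn_of_mem_footprint hS.nodup ha hu hua hadj hw (hsub (mem_footprint.1 hw).1)

lemma card_add_card_le_of_footprint {W X T : Finset V} {x₀ : V} (hXS : ∀ x ∈ X, x ∈ S)
    (hmeet : ∀ x ∈ X, ∃ w ∈ W, w ∈ footprint G S x) (hx₀ : x₀ ∈ X) (hTW : T ⊆ W)
    (hT : ∀ w ∈ T, w ∈ footprint G S x₀) : #X + #T ≤ #W + 1 := by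
  classical
  let F (x : V) : Finset V := W.filter (· ∈ footprint G S x)
  have hdisj : (X : Set V).PairwiseDisjoint F := fun x hx y hy hxy =>
    disjoint_filter.2 fun _ _ hwx =>
      Set.disjoint_left.1 (footprint_disjoint (hXS x hx) (hXS y hy) hxy) hwx
  have hsum : ∑ x ∈ X, #(F x) ≤ #W := by
    rw [← card_biUnion hdisj]
    exact card_le_card (biUnion_subset.2 fun x _ => filter_subset _ _)
  have hF₀ : #T ≤ #(F x₀) := card_le_card fun w hw => mem_filter.2 ⟨hTW hw, hT w hw⟩
  have hF : #(X.erase x₀) ≤ ∑ x ∈ X.erase x₀, #(F x) := by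
    simpa using card_nsmul_le_sum (X.erase x₀) (fun x => #(F x)) 1 fun x hx =>
      card_pos.2 (by simpa [F, Finset.Nonempty] using hmeet x (mem_of_mem_erase hx))
  rw [← add_sum_erase X _ hx₀] at hsum
  have := card_erase_add_one hx₀
  omega

lemma mem_footprint_of_sortedLT [LinearOrder V] (hS : S.SortedLT) {x w : V} (hx : x ∈ S) :
    w ∈ footprint G S x ↔ w ∈ cn G x ∧ ∀ u ∈ S, u < x → w ∉ cn G u := by
  have hlt : ∀ u ∈ S, S.idxOf u < S.idxOf x ↔ u < x := fun u hu => by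
    simpa [List.idxOf_get] using (hS.strictMono_get.lt_iff_lt
      (a := ⟨S.idxOf u, List.idxOf_lt_length_iff.2 hu⟩)
      (b := ⟨S.idxOf x, List.idxOf_lt_length_iff.2 hx⟩)).symm
  rw [mem_footprint]
  exact and_congr_right fun _ => forall₂_congr fun u hu => by rw [hlt u hu]

end Footprint

section PathPow

variable {n m : ℕ}

lemma mem_cn_pathPow {v w : Fin n} :
    w ∈ cn (pathPow n m) v ↔ v.val ≤ w.val + m ∧ w.val ≤ v.val + m := by
  simp only [cn, Set.mem_insert_iff, SimpleGraph.mem_neighborSet, pathPow, Nat.dist]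
  constructor
  · rintro (rfl | ⟨-, h⟩) <;> omega
  · intro h
    by_cases hwv : w = v
    · exact Or.inl hwv
    · exact Or.inr ⟨Ne.symm hwv, by omega⟩

lemma IsIndep.add_lt_of_lt {I : Set (Fin n)} (hI : IsIndep (pathPow n m) I) {x y : Fin n}
    (hx : x ∈ I) (hy : y ∈ I) (hxy : x < y) : x.val + m < y.val := by
  by_contra h
  refine hI hx hy hxy.ne ⟨hxy.ne, ?_⟩
  rw [Fin.lt_def] at hxy
  simp only [Nat.dist]
  omega

variable {S : List (Fin n)}

lemma IsLegal.le_of_mem_of_le (hS : IsLegal (pathPow n m) S) {a v : Fin n}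
    (ha : a ∈ selfFoot (pathPow n m) S) (ham : a.val ≤ m) (hv : v ∈ S) : a ≤ v := by
  by_contra! hva
  rw [Fin.lt_def] at hva
  refine hS.notMem_of_cn_subset ha (Fin.ne_of_lt hva) (mem_cn_pathPow.2 ?_) (fun w hw => ?_) hv
  · omega
  · rw [mem_cn_pathPow] at hw ⊢
    omega

lemma IsLegal.le_of_mem_of_ge (hS : IsLegal (pathPow n m) S) {a v : Fin n}
    (ha : a ∈ selfFoot (pathPow n m) S) (ham : n ≤ a.val + m + 1) (hv : v ∈ S) : v ≤ a := by
  by_contra! hva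
  rw [Fin.lt_def] at hva
  refine hS.notMem_of_cn_subset ha (Fin.ne_of_gt hva) (mem_cn_pathPow.2 ?_) (fun w hw => ?_) hv
  · omega
  · have := w.isLt
    rw [mem_cn_pathPow] at hw ⊢
    omega

lemma notMem_cn_of_idxOf_lt (hS : S.Nodup) {b c u w : Fin n}
    (hb : b ∈ selfFoot (pathPow n m) S) (hc : c ∈ selfFoot (pathPow n m) S) (hu : u ∈ S)
    (hub : S.idxOf u < S.idxOf b) (huc : S.idxOf u < S.idxOf c) (huW : u ∉ Icc b c)
    (hw : w ∈ Icc b c) : w ∉ cn (pathPow n m) u := by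
  intro hwu
  rw [mem_Icc, Fin.le_def, Fin.le_def] at hw huW
  rw [mem_cn_pathPow] at hwu
  rcases lt_or_ge u.val b.val with hlt | hge
  · exact (idxOf_lt_of_mem_selfFoot hS hb hu (Fin.ne_of_lt hlt)
      (mem_cn_pathPow.2 ⟨by omega, by omega⟩)).not_gt hub
  · have hgt : c.val < u.val := by
      by_contra
      exact huW ⟨hge, by omega⟩
    exact (idxOf_lt_of_mem_selfFoot hS hc hu (Fin.ne_of_gt hgt)
      (mem_cn_pathPow.2 ⟨by omega, by omega⟩)).not_gt huc

lemma IsLegal.exists_mem_Icc_mem_footprint (hS : IsLegal (pathPow n m) S) {b c x : Fin n}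
    (hb : b ∈ selfFoot (pathPow n m) S) (hc : c ∈ selfFoot (pathPow n m) S) (hx : x ∈ S)
    (hxW : x ∈ Icc b c) : ∃ w ∈ Icc b c, w ∈ footprint (pathPow n m) S x := by
  by_cases hxb : x = b
  · exact ⟨x, hxW, hxb ▸ ((mem_selfFoot_iff hS.nodup).1 hb).2⟩
  by_cases hxc : x = c
  · exact ⟨x, hxW, hxc ▸ ((mem_selfFoot_iff hS.nodup).1 hc).2⟩
  obtain ⟨w, hw⟩ := hS.footprint_nonempty hx
  have hwx := mem_cn_pathPow.1 (mem_footprint.1 hw).1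
  rw [mem_Icc, Fin.le_def, Fin.le_def] at hxW
  refine ⟨w, mem_Icc.2 ⟨Fin.le_def.2 ?_, Fin.le_def.2 ?_⟩, hw⟩
  · by_contra!
    exact notMem_cn_of_mem_footprint hS.nodup hb hx hxb
      (mem_cn_pathPow.2 ⟨by omega, by omega⟩) hw (mem_cn_pathPow.2 ⟨by omega, by omega⟩)
  · by_contra!
    exact notMem_cn_of_mem_footprint hS.nodup hc hx hxc
      (mem_cn_pathPow.2 ⟨by omega, by omega⟩) hw (mem_cn_pathPow.2 ⟨by omega, by omega⟩)

/-- The first vertex `x₀` of `S` in `[b, c]` finds all of `[b, c]` undominated, so it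
footprints the at least `m + 1` vertices of `[b, c]` within distance `m` of it. -/
lemma IsLegal.card_inter_Icc_add_le (hS : IsLegal (pathPow n m) S) {b c : Fin n}
    (hb : b ∈ selfFoot (pathPow n m) S) (hc : c ∈ selfFoot (pathPow n m) S)
    (hbc : b.val + m < c.val) :
    #(S.toFinset ∩ Icc b c) + b.val + m ≤ c.val + 1 := by
  set X := S.toFinset ∩ Icc b c
  have hmemX : ∀ {x : Fin n}, x ∈ X ↔ x ∈ S ∧ x ∈ Icc b c := by
    simp only [X, mem_inter, List.mem_toFinset, implies_true]
  have hbW : b ∈ Icc b c := left_mem_Icc.2 (Fin.le_def.2 (by omega))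
  have hcW : c ∈ Icc b c := right_mem_Icc.2 (Fin.le_def.2 (by omega))
  have hbS := ((mem_selfFoot_iff hS.nodup).1 hb).1
  have hcS := ((mem_selfFoot_iff hS.nodup).1 hc).1
  obtain ⟨x₀, hx₀X, hx₀⟩ := X.exists_min_image S.idxOf ⟨b, hmemX.2 ⟨hbS, hbW⟩⟩
  obtain ⟨hx₀S, hx₀W⟩ := hmemX.1 hx₀X
  rw [mem_Icc, Fin.le_def, Fin.le_def] at hx₀W
  have := x₀.isLt
  obtain ⟨lo, hlo⟩ : ∃ lo : Fin n, lo.val = max b.val (x₀.val - m) := ⟨⟨_, by omega⟩, rfl⟩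
  obtain ⟨hi, hhi⟩ : ∃ hi : Fin n, hi.val = min c.val (x₀.val + m) := ⟨⟨_, by omega⟩, rfl⟩
  have hsub : Icc lo hi ⊆ Icc b c := fun w hw => by
    simp only [mem_Icc, Fin.le_def] at hw ⊢
    omega
  have hT : ∀ w ∈ Icc lo hi, w ∈ footprint (pathPow n m) S x₀ := by
    refine fun w hw => mem_footprint.2 ⟨mem_cn_pathPow.2 ?_, fun u hu hux₀ => ?_⟩
    · simp only [mem_Icc, Fin.le_def] at hw
      omega
    have huX : u ∉ X := fun huX => (hx₀ u huX).not_gt hux₀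
    exact notMem_cn_of_idxOf_lt hS.nodup hb hc hu
      (hux₀.trans_le (hx₀ b (hmemX.2 ⟨hbS, hbW⟩))) (hux₀.trans_le (hx₀ c (hmemX.2 ⟨hcS, hcW⟩)))
      (fun huW => huX (hmemX.2 ⟨hu, huW⟩)) (hsub hw)
  have := card_add_card_le_of_footprint (fun x hx => (hmemX.1 hx).1)
    (fun x hx => hS.exists_mem_Icc_mem_footprint hb hc (hmemX.1 hx).1 (hmemX.1 hx).2) hx₀X hsub hT
  rw [Fin.card_Icc, Fin.card_Icc] at this
  omega

lemma IsLegal.card_inter_Icc_min'_max'_add_le (hS : IsLegal (pathPow n m) S)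
    {J : Finset (Fin n)} (hJ : IsIndep (pathPow n m) ↑J) (hJS : ↑J ⊆ selfFoot (pathPow n m) S)
    (hne : J.Nonempty) :
    #(S.toFinset ∩ Icc (J.min' hne) (J.max' hne)) + (J.min' hne).val + #J * m ≤
      (J.max' hne).val + 1 + m := by
  induction J using Finset.induction_on_max with
  | empty => exact absurd hne not_nonempty_empty
  | insert a J hlt ih =>
    rcases J.eq_empty_or_nonempty with rfl | hJ₀
    · have : #(S.toFinset ∩ Icc a a) ≤ 1 := by
        rw [Icc_self]
        exact (card_le_card inter_subset_right).trans (card_singleton a).le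
      simp only [insert_empty, min'_singleton, max'_singleton, card_singleton, one_mul]
      omega
    have haJ : a ∉ J := fun ha => (hlt a ha).false
    have hJa : IsIndep (pathPow n m) ↑J := fun x hx y hy => hJ (by simp [hx]) (by simp [hy])
    have hprev := ih hJa (fun x hx => hJS (by simp [hx])) hJ₀
    set b := J.max' hJ₀
    have hb : b ∈ J := J.max'_mem hJ₀
    have hba : b < a := hlt b hb
    have hmin : (insert a J).min' hne = J.min' hJ₀ := by
      rw [min'_insert a J hJ₀, min_eq_right (hlt _ (J.min'_mem hJ₀)).le]
    have hmax : (insert a J).max' hne = a := by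
      rw [max'_insert a J hJ₀, max_eq_left hba.le]
    have hunion : S.toFinset ∩ Icc (J.min' hJ₀) a =
        (S.toFinset ∩ Icc (J.min' hJ₀) b) ∪ (S.toFinset ∩ Icc b a) := by
      rw [← inter_union_distrib_left]
      congr 1
      rw [← coe_inj, coe_union, coe_Icc, coe_Icc, coe_Icc,
        Set.Icc_union_Icc_eq_Icc (J.min'_le b hb) hba.le]
    have hbS : b ∈ S := ((mem_selfFoot_iff hS.nodup).1 (hJS (by simp [hb]))).1
    have hinter : 1 ≤ #((S.toFinset ∩ Icc (J.min' hJ₀) b) ∩ (S.toFinset ∩ Icc b a)) :=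
      card_pos.2 ⟨b, by simp [hbS, J.min'_le b hb, hba.le]⟩
    have hwindow := hS.card_inter_Icc_add_le (hJS (by simp [hb])) (hJS (by simp))
      (hJ.add_lt_of_lt (by simp [hb]) (by simp) hba)
    have hunion_card := card_union_add_card_inter (S.toFinset ∩ Icc (J.min' hJ₀) b)
      (S.toFinset ∩ Icc b a)
    rw [hmin, hmax, hunion, card_insert_of_notMem haJ, add_mul, one_mul]
    omega

theorem IsLegal.length_add_le (hS : IsLegal (pathPow n m) S) {I : Finset (Fin n)}
    (hI : IsIndep (pathPow n m) ↑I) (hne : I.Nonempty) (hSI : selfFoot (pathPow n m) S = ↑I)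
    (hmin : (I.min' hne).val ≤ m) (hmax : n ≤ (I.max' hne).val + m + 1) :
    S.length + (I.min' hne).val + #I * m ≤ (I.max' hne).val + 1 + m := by
  have hsub : S.toFinset ⊆ Icc (I.min' hne) (I.max' hne) := fun v hv =>
    have hv := List.mem_toFinset.1 hv
    mem_Icc.2 ⟨hS.le_of_mem_of_le (hSI ▸ I.min'_mem hne) hmin hv,
      hS.le_of_mem_of_ge (hSI ▸ I.max'_mem hne) hmax hv⟩
  have := hS.card_inter_Icc_min'_max'_add_le hI hSI.ge hne
  rwa [inter_eq_left.2 hsub, List.toFinset_card_of_nodup hS.nodup] at this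

variable (m) in
def extremalSet (I : Finset (Fin n)) (hne : I.Nonempty) : Finset (Fin n) :=
  (Icc (I.min' hne) (I.max' hne)).filter fun x => ∀ y ∈ I, x < y → x.val + m < y.val

variable (m) in
def extremalSeq (I : Finset (Fin n)) (hne : I.Nonempty) : List (Fin n) :=
  (extremalSet m I hne).sort

variable {I : Finset (Fin n)} {hne : I.Nonempty}

lemma mem_extremalSet {x : Fin n} :
    x ∈ extremalSet m I hne ↔ I.min' hne ≤ x ∧ x ≤ I.max' hne ∧
      ∀ y ∈ I, x < y → x.val + m < y.val := by
  simp only [extremalSet, mem_filter, mem_Icc, and_assoc]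

lemma subset_extremalSet (hI : IsIndep (pathPow n m) ↑I) : I ⊆ extremalSet m I hne :=
  fun x hx => mem_extremalSet.2 ⟨I.min'_le x hx, I.le_max' x hx,
    fun _ hy hxy => hI.add_lt_of_lt hx hy hxy⟩

variable (hne) in
lemma add_le_card_extremalSet :
    (I.max' hne).val + 1 + m ≤ #(extremalSet m I hne) + (I.min' hne).val + #I * m := by
  rw [← card_erase_add_one (I.min'_mem hne), add_mul, one_mul]
  set a := I.min' hne
  let below (y : Fin n) : Finset (Fin n) :=
    Ico ⟨y.val - m, lt_of_le_of_lt (Nat.sub_le _ _) y.isLt⟩ y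
  have hsub : Icc a (I.max' hne) \ (I.erase a).biUnion below ⊆ extremalSet m I hne := by
    intro x hx
    obtain ⟨hxI, hxB⟩ := mem_sdiff.1 hx
    obtain ⟨hax, hxa⟩ := mem_Icc.1 hxI
    refine mem_extremalSet.2 ⟨hax, hxa, fun y hy hxy => ?_⟩
    by_contra! hyx
    refine hxB (mem_biUnion.2 ⟨y, mem_erase.2 ⟨(hax.trans_lt hxy).ne', hy⟩, ?_⟩)
    simp only [below, mem_Ico, Fin.le_def, Fin.lt_def] at hxy ⊢
    omega
  have hbelow : #((I.erase a).biUnion below) ≤ #(I.erase a) * m := by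
    refine card_biUnion_le.trans ?_
    rw [← smul_eq_mul]
    exact sum_le_card_nsmul _ _ _ fun y _ => by simp only [below, Fin.card_Ico]; omega
  have hcard := (card_le_card_sdiff_add_card (s := Icc a (I.max' hne))
    (t := (I.erase a).biUnion below)).trans (Nat.add_le_add_right (card_le_card hsub) _)
  rw [Fin.card_Icc] at hcard
  omega

lemma mem_extremalSeq {x : Fin n} : x ∈ extremalSeq m I hne ↔ x ∈ extremalSet m I hne :=
  mem_sort _

lemma extremalSeq_nodup : (extremalSeq m I hne).Nodup :=
  sort_nodup _ _

lemma length_extremalSeq : (extremalSeq m I hne).length = #(extremalSet m I hne) :=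
  length_sort _

lemma mem_footprint_extremalSeq {x w : Fin n} (hx : x ∈ extremalSet m I hne) :
    w ∈ footprint (pathPow n m) (extremalSeq m I hne) x ↔ w ∈ cn (pathPow n m) x ∧
      ∀ u ∈ extremalSet m I hne, u < x → w ∉ cn (pathPow n m) u := by
  rw [mem_footprint_of_sortedLT (S := extremalSeq m I hne) (sortedLT_sort _)
    (mem_extremalSeq.2 hx)]
  simp only [mem_extremalSeq]

lemma self_mem_footprint_extremalSeq {x : Fin n} (hx : x ∈ extremalSet m I hne) (hxI : x ∈ I) :
    x ∈ footprint (pathPow n m) (extremalSeq m I hne) x := by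
  refine (mem_footprint_extremalSeq hx).2
    ⟨mem_cn_pathPow.2 ⟨by omega, by omega⟩, fun u hu hux hxu => ?_⟩
  have := (mem_extremalSet.1 hu).2.2 x hxI hux
  rw [mem_cn_pathPow] at hxu
  omega

lemma footprint_extremalSeq_nonempty {x : Fin n} (hx : x ∈ extremalSet m I hne) :
    (footprint (pathPow n m) (extremalSeq m I hne) x).Nonempty := by
  by_cases hxI : x ∈ I
  · exact ⟨x, self_mem_footprint_extremalSeq hx hxI⟩
  obtain ⟨-, hxmax, hfar⟩ := mem_extremalSet.1 hx
  have hlt := hfar _ (I.max'_mem hne) (hxmax.lt_of_ne fun h => hxI (h ▸ I.max'_mem hne))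
  have := (I.max' hne).isLt
  obtain ⟨w, hw⟩ : ∃ w : Fin n, w.val = x.val + m := ⟨⟨_, by omega⟩, rfl⟩
  refine ⟨w, (mem_footprint_extremalSeq hx).2
    ⟨mem_cn_pathPow.2 ⟨by omega, by omega⟩, fun u _ hux hwu => ?_⟩⟩
  rw [mem_cn_pathPow] at hwu
  rw [Fin.lt_def] at hux
  omega

lemma notMem_footprint_extremalSeq_self (hm : 1 ≤ m) {x : Fin n}
    (hx : x ∈ extremalSet m I hne) (hxI : x ∉ I) :
    x ∉ footprint (pathPow n m) (extremalSeq m I hne) x := by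
  obtain ⟨hminx, hxmax, hfar⟩ := mem_extremalSet.1 hx
  rw [Fin.le_def] at hxmax
  have hlt : (I.min' hne).val < x.val :=
    Fin.lt_def.1 (hminx.lt_of_ne fun h => hxI (h ▸ I.min'_mem hne))
  obtain ⟨u, hu⟩ : ∃ u : Fin n, u.val = x.val - 1 := ⟨⟨_, by omega⟩, rfl⟩
  have huS : u ∈ extremalSet m I hne := by
    refine mem_extremalSet.2 ⟨Fin.le_def.2 (by omega), Fin.le_def.2 (by omega),
      fun y hy huy => ?_⟩
    rw [Fin.lt_def] at huy
    have hxy : x < y := lt_of_le_of_ne (Fin.le_def.2 (by omega)) fun h => hxI (h ▸ hy)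
    have := hfar y hy hxy
    omega
  intro hfx
  exact (mem_footprint_extremalSeq hx).1 hfx |>.2 u huS (Fin.lt_def.2 (by omega))
    (mem_cn_pathPow.2 ⟨by omega, by omega⟩)

lemma extremalSeq_dominates (hI : IsIndep (pathPow n m) ↑I) (hmin : (I.min' hne).val ≤ m)
    (hmax : n ≤ (I.max' hne).val + m + 1) (v : Fin n) :
    ∃ u ∈ extremalSeq m I hne, v ∈ cn (pathPow n m) u := by
  simp only [mem_extremalSeq]
  by_cases hv : v.val ≤ (I.min' hne).val + m
  · exact ⟨_, subset_extremalSet hI (I.min'_mem hne), mem_cn_pathPow.2 ⟨by omega, hv⟩⟩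
  have := v.isLt
  obtain ⟨u, hu⟩ : ∃ u : Fin n, u.val = v.val - m := ⟨⟨_, by omega⟩, rfl⟩
  by_cases huS : u ∈ extremalSet m I hne
  · exact ⟨u, huS, mem_cn_pathPow.2 ⟨by omega, by omega⟩⟩
  simp only [mem_extremalSet, not_and, not_forall, not_lt] at huS
  obtain ⟨y, hy, huy, hyu⟩ := huS (Fin.le_def.2 (by omega)) (Fin.le_def.2 (by omega))
  rw [Fin.lt_def] at huy
  exact ⟨y, subset_extremalSet hI hy, mem_cn_pathPow.2 ⟨by omega, by omega⟩⟩

theorem isLegal_extremalSeq (hI : IsIndep (pathPow n m) ↑I) (hmin : (I.min' hne).val ≤ m)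
    (hmax : n ≤ (I.max' hne).val + m + 1) : IsLegal (pathPow n m) (extremalSeq m I hne) :=
  isLegal_of_footprint_nonempty extremalSeq_nodup (extremalSeq_dominates hI hmin hmax)
    fun _ hx => footprint_extremalSeq_nonempty (mem_extremalSeq.1 hx)

variable (hne) in
theorem selfFoot_extremalSeq (hm : 1 ≤ m) (hI : IsIndep (pathPow n m) ↑I) :
    selfFoot (pathPow n m) (extremalSeq m I hne) = ↑I := by
  ext x
  rw [mem_selfFoot_iff extremalSeq_nodup, mem_extremalSeq, mem_coe]
  constructor
  · rintro ⟨hx, hfx⟩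
    by_contra hxI
    exact notMem_footprint_extremalSeq_self hm hx hxI hfx
  · intro hxI
    have hx := subset_extremalSet (hne := hne) hI hxI
    exact ⟨hx, self_mem_footprint_extremalSeq hx hxI⟩

end PathPow

end GrundyDom

theorem stmt11_general (n m : ℕ) (hm : 1 ≤ m)
    (I : Finset (Fin n)) (hne : I.Nonempty) (hind : IsIndep (pathPow n m) ↑I)
    (hmin : ((I.min' hne).val : ℤ) + 1 ≤ m + 1)
    (hmax : (n : ℤ) - m ≤ ((I.max' hne).val : ℤ) + 1) :
    (gammaGrOn (pathPow n m) ↑I : ℤ) =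
      ((I.max' hne).val : ℤ) - ((I.min' hne).val : ℤ) + 1 - ((I.card : ℤ) - 1) * m := by
  replace hmin : (I.min' hne).val ≤ m := by omega
  replace hmax : n ≤ (I.max' hne).val + m + 1 := by omega
  have hlegal := isLegal_extremalSeq hind hmin hmax
  have hsf := selfFoot_extremalSeq hne hm hind
  have hlen : (extremalSeq m I hne).length + (I.min' hne).val + #I * m =
      (I.max' hne).val + 1 + m :=
    le_antisymm (hlegal.length_add_le hind hne hsf hmin hmax)
      (length_extremalSeq ▸ add_le_card_extremalSet hne)
  have hgreatest : IsGreatest {k | ∃ S, IsLegal (pathPow n m) S ∧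
      selfFoot (pathPow n m) S = ↑I ∧ S.length = k} (extremalSeq m I hne).length := by
    refine ⟨⟨_, hlegal, hsf, rfl⟩, ?_⟩
    rintro _ ⟨S, hS, hSI, rfl⟩
    have := hS.length_add_le hind hne hSI hmin hmax
    omega
  rw [gammaGrOn, hgreatest.csSup_eq]
  zify at hlen
  linarith

/-- for an independent set `I` of `P_n^m` with `min(I) ≤ m+1` and
`max(I) ≥ n-m` (vertices `0`-based: `j : Fin n` represents `j+1 ∈ [n]`),
`γ_gr(P_n^m, I) = max(I) - min(I) + 1 - (|I|-1)·m`. -/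
theorem stmt11 (n m : ℕ) (hm : 1 ≤ m) (hn : m + 2 ≤ n)
    (I : Finset (Fin n)) (hne : I.Nonempty) (hind : IsIndep (pathPow n m) ↑I)
    (hmin : ((I.min' hne).val : ℤ) + 1 ≤ m + 1)
    (hmax : (n : ℤ) - m ≤ ((I.max' hne).val : ℤ) + 1) :
    (gammaGrOn (pathPow n m) ↑I : ℤ) =
      ((I.max' hne).val : ℤ) - ((I.min' hne).val : ℤ) + 1 - ((I.card : ℤ) - 1) * m :=
  stmt11_general n m hm I hne hind hmin hmax
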